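/- arXiv:1211.6703 — 6 statements merged into one kernel-verified Lean document; each statement's English description precedes it below -/
import Mathlib

section
/- For every S > 0 there exists exactly one η_w > 0 such that √π · S · η_w · exp(η_w²/4) · erf(η_w/2) − 2 = 0, where erf(x) = (2/√π)·∫₀^x e^(−s²) ds. -/
/-- The error function `erf x = (2/√π) ∫₀ˣ e^{-s²} ds`. -/
noncomputable def erf (x : ℝ) : ℝ :=
  (2 / Real.sqrt Real.pi) * ∫ s in (0 : ℝ)..x, Real.exp (-(s ^ 2))

lemma intExp (a b : ℝ) :
    IntervalIntegrable (fun s : ℝ => Real.exp (-(s ^ 2))) MeasureTheory.volume a b :=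
  Continuous.intervalIntegrable (by continuity) a b

lemma erf_strictMono : StrictMono erf := by
  intro a b hab
  unfold erf
  have hpi : (0 : ℝ) < Real.sqrt Real.pi := Real.sqrt_pos.mpr Real.pi_pos
  have h2 : (0 : ℝ) < 2 / Real.sqrt Real.pi := by positivity
  apply mul_lt_mul_of_pos_left _ h2
  have hpos : 0 < ∫ s in a..b, Real.exp (-(s ^ 2)) := by
    apply intervalIntegral.intervalIntegral_pos_of_pos_on (intExp a b)
    · intro x _; exact Real.exp_pos _
    · exact hab
  have hsplit := intervalIntegral.integral_add_adjacent_intervals (intExp 0 a) (intExp a b)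
  linarith [hsplit]

lemma erf_zero : erf 0 = 0 := by
  unfold erf; simp

lemma erf_pos {x : ℝ} (hx : 0 < x) : 0 < erf x := by
  have := erf_strictMono hx
  rwa [erf_zero] at this

lemma erf_continuous : Continuous erf := by
  unfold erf
  exact continuous_const.mul (intervalIntegral.continuous_primitive (fun a b => intExp a b) 0)

/-- For every Stefan parameter `S > 0` the transcendental equation
`√π S η_w e^{η_w²/4} erf(η_w/2) − 2 = 0` has exactly one positive root. -/
theorem stmt_7 (S : ℝ) (hS : 0 < S) :
    ∃! x : ℝ, 0 < x ∧
      Real.sqrt Real.pi * S * x * Real.exp (x ^ 2 / 4) * erf (x / 2) - 2 = 0 := by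
  have hpi : (0 : ℝ) < Real.sqrt Real.pi := Real.sqrt_pos.mpr Real.pi_pos
  set g : ℝ → ℝ := fun x => Real.sqrt Real.pi * S * x * Real.exp (x ^ 2 / 4) * erf (x / 2)
    with hg
  have hgc : Continuous g := by
    apply Continuous.mul
    · apply Continuous.mul
      · continuity
      · continuity
    · exact erf_continuous.comp (by continuity)
  have hmono : StrictMonoOn g (Set.Ici 0) := by
    intro a ha b hb hab
    have ha0 : (0 : ℝ) ≤ a := ha
    have hb0 : (0 : ℝ) < b := lt_of_le_of_lt ha0 hab
    have hexp : Real.exp (a ^ 2 / 4) ≤ Real.exp (b ^ 2 / 4) := by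
      apply Real.exp_le_exp.mpr
      nlinarith
    have herf : erf (a / 2) ≤ erf (b / 2) :=
      (erf_strictMono.monotone (by linarith))
    have herfb : 0 < erf (b / 2) := erf_pos (by linarith)
    have herfa : 0 ≤ erf (a / 2) := by
      have := erf_strictMono.monotone (show (0:ℝ) ≤ a / 2 by linarith)
      rwa [erf_zero] at this
    simp only [hg]
    calc Real.sqrt Real.pi * S * a * Real.exp (a ^ 2 / 4) * erf (a / 2)
        ≤ Real.sqrt Real.pi * S * a * Real.exp (b ^ 2 / 4) * erf (b / 2) := by
          apply mul_le_mul
          · apply mul_le_mul_of_nonneg_left hexp; positivity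
          · exact herf
          · exact herfa
          · positivity
      _ < Real.sqrt Real.pi * S * b * Real.exp (b ^ 2 / 4) * erf (b / 2) := by
          have h1 : Real.sqrt Real.pi * S * a < Real.sqrt Real.pi * S * b := by
            apply mul_lt_mul_of_pos_left hab; positivity
          apply mul_lt_mul_of_pos_right _ herfb
          exact mul_lt_mul_of_pos_right h1 (Real.exp_pos _)
  -- find M with g M ≥ 2
  have hc : 0 < erf 1 := erf_pos one_pos
  set M : ℝ := max 2 (2 / (Real.sqrt Real.pi * S * erf 1)) with hM
  have hM2 : (2 : ℝ) ≤ M := le_max_left _ _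
  have hMge : 2 / (Real.sqrt Real.pi * S * erf 1) ≤ M := le_max_right _ _
  have hMpos : 0 < M := lt_of_lt_of_le two_pos hM2
  have hgM : 2 ≤ g M := by
    have herfM : erf 1 ≤ erf (M / 2) := erf_strictMono.monotone (by linarith)
    have hexpM : (1 : ℝ) ≤ Real.exp (M ^ 2 / 4) := by
      rw [show (1:ℝ) = Real.exp 0 by simp]
      apply Real.exp_le_exp.mpr; positivity
    have key : 2 ≤ Real.sqrt Real.pi * S * erf 1 * M := by
      rw [div_le_iff₀ (by positivity)] at hMge
      linarith
    have : Real.sqrt Real.pi * S * erf 1 * M ≤ g M := by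
      simp only [hg]
      calc Real.sqrt Real.pi * S * erf 1 * M
          = Real.sqrt Real.pi * S * M * 1 * erf 1 := by ring
        _ ≤ Real.sqrt Real.pi * S * M * Real.exp (M ^ 2 / 4) * erf (M / 2) := by
            apply mul_le_mul _ herfM (le_of_lt hc) (by positivity)
            apply mul_le_mul_of_nonneg_left hexpM (by positivity)
    linarith
  have hg0 : g 0 = 0 := by simp [hg]
  -- IVT
  obtain ⟨x, hxmem, hgx⟩ : ∃ x ∈ Set.Icc (0:ℝ) M, g x = 2 := by
    have := intermediate_value_Icc (le_of_lt hMpos) (hgc.continuousOn)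
    apply this
    rw [hg0]
    exact ⟨by norm_num, hgM⟩
  have hxpos : 0 < x := by
    rcases lt_or_eq_of_le hxmem.1 with h | h
    · exact h
    · exfalso; rw [← h] at hgx; rw [hg0] at hgx; norm_num at hgx
  refine ⟨x, ⟨hxpos, by rw [show Real.sqrt Real.pi * S * x * Real.exp (x ^ 2 / 4) * erf (x / 2) = g x from rfl, hgx]; ring⟩, ?_⟩
  rintro y ⟨hy, hy2⟩
  have hgy : g y = 2 := by
    have : g y - 2 = 0 := hy2
    linarith
  exact hmono.injOn (le_of_lt hy) hxmem.1 (by rw [hgy, hgx])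
end

section
/- Let j, ℓ : ℝ → ℝ, let δ, σ ∈ ℝ with σ ≠ 0, let h > 0, ω > 0, and s > 0, and let w : [0, s] → ℝ be differentiable. Define h* := ω^σ·h, s* := ω^δ·s, and w*(z) := ω·w(ω^(−δ)·z). If w satisfies the extended free boundary conditions w(s) = h^(1/σ)·j(h^(−δ/σ)·s) and (dw/dz)(s) = h^((1−δ)/σ)·ℓ(h^(−δ/σ)·s), then w* satisfies the same conditions in starred variables: w*(s*) = (h*)^(1/σ)·j((h*)^(−δ/σ)·s*) and (dw*/dz)(s*) = (h*)^((1−δ)/σ)·ℓ((h*)^(−δ/σ)·s*). -/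
/-- Invariance of the extended free boundary conditions
`w(s) = h^{1/σ} j(h^{-δ/σ}s)` and `w'(s) = h^{(1−δ)/σ} ℓ(h^{-δ/σ}s)`
under the extended scaling group `z* = ω^δ z, s* = ω^δ s, w* = ω w, h* = ω^σ h`. -/
theorem stmt_11 (j ℓ : ℝ → ℝ) (δ σ : ℝ) (hσ : σ ≠ 0)
    (h ω s : ℝ) (hh : 0 < h) (hω : 0 < ω) (hs : 0 < s) (w : ℝ → ℝ)
    (hdiff : ∀ z ∈ Set.Icc (0 : ℝ) s, DifferentiableAt ℝ w z)
    (hbc1 : w s = h ^ ((1 : ℝ) / σ) * j (h ^ (-δ / σ) * s))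
    (hbc2 : deriv w s = h ^ ((1 - δ) / σ) * ℓ (h ^ (-δ / σ) * s)) :
    (fun z => ω * w (ω ^ (-δ) * z)) (ω ^ δ * s)
        = (ω ^ σ * h) ^ ((1 : ℝ) / σ) * j ((ω ^ σ * h) ^ (-δ / σ) * (ω ^ δ * s))
    ∧ deriv (fun z => ω * w (ω ^ (-δ) * z)) (ω ^ δ * s)
        = (ω ^ σ * h) ^ ((1 - δ) / σ) * ℓ ((ω ^ σ * h) ^ (-δ / σ) * (ω ^ δ * s)) := by
  have hωσ : (0:ℝ) < ω ^ σ := Real.rpow_pos_of_pos hω σ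
  have key1 : (ω ^ σ * h) ^ ((1:ℝ)/σ) = ω * h ^ ((1:ℝ)/σ) := by
    rw [Real.mul_rpow hωσ.le hh.le, ← Real.rpow_mul hω.le, mul_one_div, div_self hσ,
      Real.rpow_one]
  have key2 : (ω ^ σ * h) ^ (-δ/σ) = ω ^ (-δ) * h ^ (-δ/σ) := by
    rw [Real.mul_rpow hωσ.le hh.le, ← Real.rpow_mul hω.le,
      show σ * (-δ/σ) = -δ by field_simp]
  have key3 : (ω ^ σ * h) ^ ((1-δ)/σ) = ω ^ (1-δ) * h ^ ((1-δ)/σ) := by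
    rw [Real.mul_rpow hωσ.le hh.le, ← Real.rpow_mul hω.le,
      show σ * ((1-δ)/σ) = 1-δ by field_simp]
  have harg : ω ^ (-δ) * (ω ^ δ * s) = s := by
    rw [← mul_assoc, ← Real.rpow_add hω, neg_add_cancel, Real.rpow_zero, one_mul]
  have harg2 : (ω ^ σ * h) ^ (-δ/σ) * (ω ^ δ * s) = h ^ (-δ/σ) * s := by
    rw [key2, show ω ^ (-δ) * h ^ (-δ/σ) * (ω ^ δ * s)
        = h ^ (-δ/σ) * (ω ^ (-δ) * (ω ^ δ * s)) by ring, harg]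
  have hd : HasDerivAt w (deriv w s) s :=
    (hdiff s ⟨hs.le, le_refl s⟩).hasDerivAt
  have hinner : HasDerivAt (fun z => ω ^ (-δ) * z) (ω ^ (-δ)) (ω ^ δ * s) := by
    simpa using (hasDerivAt_id (ω ^ δ * s)).const_mul (ω ^ (-δ))
  have hd' : HasDerivAt w (deriv w s) (ω ^ (-δ) * (ω ^ δ * s)) := by rw [harg]; exact hd
  have hc : HasDerivAt (fun z => ω * w (ω ^ (-δ) * z)) (ω * (deriv w s * ω ^ (-δ)))
      (ω ^ δ * s) := (hd'.comp (ω ^ δ * s) hinner).const_mul ω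
  have hpow : ω ^ (1 - δ) = ω * ω ^ (-δ) := by
    rw [show (1 - δ : ℝ) = 1 + -δ by ring, Real.rpow_add hω, Real.rpow_one]
  constructor
  · simp only
    rw [harg, harg2, key1, hbc1]; ring
  · rw [hc.deriv, harg2, key3, hbc2, hpow]; ring
end

section
/- Let S > 0, h* > 0, and η_w* > 0. Suppose U* : [0, η_w*] → ℝ is twice continuously differentiable and solves the extended similarity Stefan problem: d²U*/dη*² + ((h*)^(1/2)/2)·η*·(dU*/dη*) = 0 on (0, η_w*), U*(η_w*) = 0, and dU*/dη*(η_w*) = −((h*)^(3/4)/2)·S·η_w*. Assume ω := U*(0) > 0 satisfies ω⁴ = h*. Define U(η) := ω^(−1)·U*(ω^(−1)·η) for η ∈ [0, ω·η_w*] and η_w := ω·η_w*. Then U solves the similarity Stefan free boundary problem: d²U/dη² + (1/2)·η·dU/dη = 0 on (0, η_w), U(0) = 1, U(η_w) = 0, and dU/dη(η_w) = −(S/2)·η_w. -/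
lemma my_diff_comp_mul {f : ℝ → ℝ} {c x : ℝ} (hc : c ≠ 0)
    (h : DifferentiableAt ℝ (fun y => f (c * y)) x) : DifferentiableAt ℝ f (c * x) := by
  have hx : c⁻¹ * (c * x) = x := by field_simp
  have h' : DifferentiableAt ℝ (fun y => f (c * y)) (c⁻¹ * (c * x)) := by rwa [hx]
  have h2 : DifferentiableAt ℝ (fun y => f (c * (c⁻¹ * y))) (c * x) :=
    h'.comp (c * x) ((differentiableAt_id.const_mul c⁻¹))
  have : (fun y => f (c * (c⁻¹ * y))) = f := by
    funext y; rw [← mul_assoc, mul_inv_cancel₀ hc, one_mul]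
  rwa [this] at h2

lemma my_deriv_comp_mul (f : ℝ → ℝ) {c : ℝ} (x : ℝ) (hc : c ≠ 0) :
    deriv (fun y => f (c * y)) x = c * deriv f (c * x) := by
  by_cases hf : DifferentiableAt ℝ f (c * x)
  · have h := HasDerivAt.comp x hf.hasDerivAt ((hasDerivAt_id x).const_mul c)
    simp only [Function.comp_def, mul_one] at h
    rw [h.deriv, mul_comm]
  · rw [deriv_zero_of_not_differentiableAt (fun h => hf (my_diff_comp_mul hc h)),
      deriv_zero_of_not_differentiableAt hf, mul_zero]

/-- If `U*` solves the extended similarity Stefan problem with parameter `h*`,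
and the group parameter `ω = U*(0) > 0` satisfies `ω⁴ = h*`, then the rescaled
function `U(η) = ω⁻¹ U*(ω⁻¹ η)` with free boundary `η_w = ω η_w*` solves the
similarity Stefan free boundary problem. -/
theorem stmt_13 (S hstar ηws : ℝ) (hS : 0 < S) (hh : 0 < hstar) (hηws : 0 < ηws)
    (Us : ℝ → ℝ) (hUs : ContDiffOn ℝ 2 Us (Set.Icc 0 ηws))
    (hode : ∀ η ∈ Set.Ioo (0 : ℝ) ηws,
      deriv (deriv Us) η + (hstar ^ ((1 : ℝ) / 2) / 2) * η * deriv Us η = 0)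
    (hbc1 : Us ηws = 0)
    (hbc2 : deriv Us ηws = -(hstar ^ ((3 : ℝ) / 4) / 2) * S * ηws)
    (ω : ℝ) (hωdef : ω = Us 0) (hωpos : 0 < ω) (hωh : ω ^ (4 : ℕ) = hstar) :
    (∀ η ∈ Set.Ioo (0 : ℝ) (ω * ηws),
      deriv (deriv (fun η' => ω⁻¹ * Us (ω⁻¹ * η'))) η
        + (1 / 2) * η * deriv (fun η' => ω⁻¹ * Us (ω⁻¹ * η')) η = 0)
    ∧ ω⁻¹ * Us (ω⁻¹ * 0) = 1
    ∧ ω⁻¹ * Us (ω⁻¹ * (ω * ηws)) = 0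
    ∧ deriv (fun η' => ω⁻¹ * Us (ω⁻¹ * η')) (ω * ηws) = -(S / 2) * (ω * ηws) := by
  have hω0 : ω ≠ 0 := ne_of_gt hωpos
  have hωi : ω⁻¹ ≠ 0 := inv_ne_zero hω0
  -- rpow computations
  have hrp : ∀ r : ℝ, hstar ^ r = ω ^ (4 * r) := by
    intro r
    rw [← hωh]
    rw [← Real.rpow_natCast ω 4, ← Real.rpow_mul hωpos.le]
    norm_num
  have h12 : hstar ^ ((1 : ℝ) / 2) = ω ^ (2 : ℕ) := by
    rw [hrp, ← Real.rpow_natCast ω 2]; norm_num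
  have h34 : hstar ^ ((3 : ℝ) / 4) = ω ^ (3 : ℕ) := by
    rw [hrp, ← Real.rpow_natCast ω 3]; norm_num
  -- first derivative of the rescaled function
  have hd1 : ∀ x : ℝ, deriv (fun η' => ω⁻¹ * Us (ω⁻¹ * η')) x
      = ω⁻¹ * (ω⁻¹ * deriv Us (ω⁻¹ * x)) := by
    intro x
    rw [deriv_const_mul_field, my_deriv_comp_mul Us x hωi]
  have hd1' : (deriv (fun η' => ω⁻¹ * Us (ω⁻¹ * η')))
      = fun x => ω⁻¹ * (ω⁻¹ * deriv Us (ω⁻¹ * x)) := funext hd1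
  have hd2 : ∀ x : ℝ, deriv (deriv (fun η' => ω⁻¹ * Us (ω⁻¹ * η'))) x
      = ω⁻¹ * (ω⁻¹ * (ω⁻¹ * deriv (deriv Us) (ω⁻¹ * x))) := by
    intro x
    rw [hd1', deriv_const_mul_field, deriv_const_mul_field,
      my_deriv_comp_mul (deriv Us) x hωi]
  refine ⟨?_, ?_, ?_, ?_⟩
  · intro η hη
    have hx : ω⁻¹ * η ∈ Set.Ioo (0 : ℝ) ηws := by
      constructor
      · exact mul_pos (inv_pos.mpr hωpos) hη.1
      · rw [inv_mul_lt_iff₀ hωpos]; exact hη.2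
    have hodeη := hode _ hx
    rw [h12] at hodeη
    rw [hd2, hd1]
    have hUs2 : deriv (deriv Us) (ω⁻¹ * η)
        = -(ω ^ (2 : ℕ) / 2) * (ω⁻¹ * η) * deriv Us (ω⁻¹ * η) := by linarith
    rw [hUs2]
    field_simp
    ring
  · rw [mul_zero, ← hωdef, inv_mul_cancel₀ hω0]
  · rw [← mul_assoc, inv_mul_cancel₀ hω0, one_mul, hbc1, mul_zero]
  · rw [hd1, ← mul_assoc ω⁻¹ ω ηws, inv_mul_cancel₀ hω0, one_mul, hbc2, h34]
    field_simp
end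

section
/- Define U(η) := ((3/10)·(5/12 + 1 − η²))^(1/3) for η ∈ [0, 1] and η_w := 1. Then U(η) > 0 on [0,1], U satisfies d²U/dη² + 3·U^(−1)·(dU/dη)² + (1/5)·η·U^(−3)·(dU/dη) + (1/5)·U^(−2) = 0 for all η ∈ (0, 1), together with dU/dη(0) = 0, U(1) = 1/2, and dU/dη(1) = −4/5; that is, (U, η_w) is an exact solution of the similarity free boundary problem with parameters H = 1/2 and L = −1/2 (note L/(5H³) = −4/5). -/
/-!
Multiplying the equation by `U³` turns it into an exact derivative,
`(U³ U' + η U / 5)' = 0`, so every solution of the first-order equation `U² U' = -η / 5`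
solves it. That equation says `(U³)' = -3η/5`, whose solutions are the cube roots of
`(3/10)(c - η²)`; the constant `c = 5/12 + 1` is fixed by `U(1) = 1/2`.
-/

open Filter Topology

theorem similarity_ode_of_hasDerivAt {U : ℝ → ℝ} {η : ℝ} (hη : U η ≠ 0)
    (hU : ∀ᶠ x in 𝓝 η, HasDerivAt U (-x / (5 * U x ^ 2)) x) :
    deriv (deriv U) η + 3 * (U η)⁻¹ * (deriv U η) ^ 2
      + (1 / 5) * η * (U η) ^ (-3 : ℤ) * deriv U η
      + (1 / 5) * (U η) ^ (-2 : ℤ) = 0 := by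
  have hderiv : deriv U =ᶠ[𝓝 η] fun x => -x / (5 * U x ^ 2) := hU.mono fun _ h => h.deriv
  have hU' := hU.self_of_nhds
  have hderiv2 := (hasDerivAt_id' η).fun_neg.fun_div ((hU'.fun_pow 2).const_mul 5)
    (mul_ne_zero (by norm_num) (pow_ne_zero 2 hη))
  rw [hderiv.deriv_eq, hderiv2.deriv, hderiv.eq_of_nhds]
  simp only [zpow_neg]
  field_simp
  ring

theorem HasDerivAt.rpow_one_div_three {f : ℝ → ℝ} {f' x : ℝ} (hf : HasDerivAt f f' x)
    (hx : 0 < f x) :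
    HasDerivAt (fun y => f y ^ ((1 : ℝ) / 3)) (f' / (3 * (f x ^ ((1 : ℝ) / 3)) ^ 2)) x := by
  have hcube : (f x ^ ((1 : ℝ) / 3)) ^ 3 = f x := by
    rw [one_div, ← Nat.cast_ofNat, Real.rpow_inv_natCast_pow hx.le three_ne_zero]
  convert hf.rpow_const (p := 1 / 3) (Or.inl hx.ne') using 1
  rw [Real.rpow_sub_one hx.ne']
  field_simp
  rw [hcube]

noncomputable def spreadingProfile (η : ℝ) : ℝ :=
  ((3 / 10) * (5 / 12 + 1 - η ^ 2)) ^ ((1 : ℝ) / 3)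

theorem spreadingProfile_pos {η : ℝ} (hη : η ^ 2 < 17 / 12) : 0 < spreadingProfile η :=
  Real.rpow_pos_of_pos (by linarith) _

theorem hasDerivAt_spreadingProfile {η : ℝ} (hη : η ^ 2 < 17 / 12) :
    HasDerivAt spreadingProfile (-η / (5 * spreadingProfile η ^ 2)) η := by
  have hquad : HasDerivAt (fun x : ℝ => (3 / 10) * (5 / 12 + 1 - x ^ 2)) (-(3 / 5) * η) η := by
    refine (((hasDerivAt_pow 2 η).const_sub (5 / 12 + 1 : ℝ)).const_mul (3 / 10)).congr_deriv ?_
    norm_num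
    ring
  refine (hquad.rpow_one_div_three (by linarith)).congr_deriv ?_
  rw [spreadingProfile]
  ring

theorem spreadingProfile_one : spreadingProfile 1 = 1 / 2 := by
  rw [spreadingProfile, show (3 / 10 : ℝ) * (5 / 12 + 1 - 1 ^ 2) = (1 / 2) ^ 3 by norm_num,
    one_div (3 : ℝ)]
  exact_mod_cast Real.pow_rpow_inv_natCast (by norm_num : (0 : ℝ) ≤ 1 / 2) three_ne_zero

/-- The explicit function `U(η) = ((3/10)(5/12 + 1 − η²))^{1/3}` with `η_w = 1`
is an exact solution of the similarity free boundary problem for the viscous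
fluid spreading model with `H = 1/2` and `L = −1/2` (so `L/(5H³) = −4/5`). -/
theorem stmt_16 :
    let U : ℝ → ℝ := fun η => ((3 / 10) * (5 / 12 + 1 - η ^ 2)) ^ ((1 : ℝ) / 3)
    (∀ η ∈ Set.Icc (0 : ℝ) 1, 0 < U η)
    ∧ (∀ η ∈ Set.Ioo (0 : ℝ) 1,
        deriv (deriv U) η + 3 * (U η)⁻¹ * (deriv U η) ^ 2
          + (1 / 5) * η * (U η) ^ (-3 : ℤ) * deriv U η
          + (1 / 5) * (U η) ^ (-2 : ℤ) = 0)
    ∧ deriv U 0 = 0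
    ∧ U 1 = 1 / 2
    ∧ deriv U 1 = -4 / 5 := by
  intro U
  change (∀ η ∈ Set.Icc (0 : ℝ) 1, 0 < spreadingProfile η)
    ∧ (∀ η ∈ Set.Ioo (0 : ℝ) 1, _)
    ∧ deriv spreadingProfile 0 = 0
    ∧ spreadingProfile 1 = 1 / 2
    ∧ deriv spreadingProfile 1 = -4 / 5
  have hsq {x : ℝ} (hx : x ∈ Set.Icc (0 : ℝ) 1) : x ^ 2 < 17 / 12 := by
    nlinarith [hx.1, hx.2]
  refine ⟨fun η hη => spreadingProfile_pos (hsq hη), fun η hη => ?_, ?_,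
    spreadingProfile_one, ?_⟩
  · refine similarity_ode_of_hasDerivAt
      (spreadingProfile_pos (hsq (Set.Ioo_subset_Icc_self hη))).ne' ?_
    filter_upwards [isOpen_Ioo.mem_nhds hη] with x hx
    exact hasDerivAt_spreadingProfile (hsq (Set.Ioo_subset_Icc_self hx))
  · rw [(hasDerivAt_spreadingProfile (by norm_num)).deriv]
    ring
  · rw [(hasDerivAt_spreadingProfile (by norm_num)).deriv, spreadingProfile_one]
    norm_num
end

section
/- Define u(x,t) := t^(−1/5) · ((3/10)·(17/12 − x²·t^(−2/5)))^(1/3) and x_w(t) := t^(1/5) for t > 0, 0 ≤ x ≤ x_w(t). Then: ∂u/∂t = ∂/∂x(u³·∂u/∂x) for all t > 0 and 0 < x < x_w(t); ∂u/∂x(0,t) = 0 for all t > 0; u(x_w(t),t) = (1/2)·t^(−1/5) for all t > 0; ∂u/∂x(x_w(t),t) = (−1/2)·x_w(t)^(−1)·(dx_w/dt)(t)·u(x_w(t),t)^(−3) for all t > 0; and x_w(0) = 0. -/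
/-! The solution is self-similar: `u(x,t) = t^(-1/5) f(x t^(-1/5))` with
`f(η) = ((3/10)(17/12 - η²))^(1/3)`. Every such function satisfies `5 t u_t = -(u + x u_x)`, and
since `(f³)' = -(3/5) η` the flux is `u³ u_x = -x u / (5 t)`; differentiating the flux in `x`
therefore gives `u_t`. The front sits at `η = 1`, where `f = 1/2`. -/

open Real Filter Topology

noncomputable section

def selfSimilar (α : ℝ) (G : ℝ → ℝ) (x t : ℝ) : ℝ := t ^ (-α) * G (x * t ^ (-α))

section SelfSimilar

variable {α : ℝ} {G : ℝ → ℝ} {G' x t : ℝ}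

theorem hasDerivAt_selfSimilar_space (hG : HasDerivAt G G' (x * t ^ (-α))) :
    HasDerivAt (selfSimilar α G · t) (t ^ (-α) * G' * t ^ (-α)) x := by
  have h := (hG.comp x ((hasDerivAt_id' x).mul_const (t ^ (-α)))).const_mul (t ^ (-α))
  exact h.congr_deriv (by ring)

theorem hasDerivAt_selfSimilar_time (ht : 0 < t) (hG : HasDerivAt G G' (x * t ^ (-α))) :
    HasDerivAt (selfSimilar α G x ·)
      (-α * (selfSimilar α G x t + x * (t ^ (-α) * G' * t ^ (-α))) / t) t := by
  have hs : HasDerivAt (fun τ : ℝ => τ ^ (-α)) (-α * t ^ (-α - 1)) t :=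
    hasDerivAt_rpow_const (Or.inl ht.ne')
  have h := hs.mul (hG.comp t (hs.const_mul x))
  rw [rpow_sub_one ht.ne'] at h
  refine h.congr_deriv ?_
  simp only [selfSimilar, Function.comp_apply]
  ring

end SelfSimilar

theorem deriv_time_eq_deriv_flux {u : ℝ → ℝ → ℝ} {m : ℕ} {α x t : ℝ}
    (hflux : (fun ξ => u ξ t ^ m * deriv (u · t) ξ) =ᶠ[𝓝 x]
      fun ξ => -α * ξ * u ξ t / t)
    (hx : DifferentiableAt ℝ (u · t) x)
    (htime : HasDerivAt (u x ·) (-α * (u x t + x * deriv (u · t) x) / t) t) :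
    deriv (u x ·) t = deriv (fun ξ => u ξ t ^ m * deriv (u · t) ξ) x := by
  have hrhs :
      HasDerivAt (fun ξ => -α * ξ * u ξ t / t) (-α * (u x t + x * deriv (u · t) x) / t) x :=
    ((((hasDerivAt_id' x).const_mul (-α)).mul hx.hasDerivAt).div_const t).congr_deriv (by ring)
  rw [htime.deriv, hflux.deriv_eq, hrhs.deriv]

def profileCube (η : ℝ) : ℝ := 3 / 10 * (17 / 12 - η ^ 2)

def profile (η : ℝ) : ℝ := profileCube η ^ (1 / 3 : ℝ)

theorem profile_pow_three {η : ℝ} (h : 0 ≤ profileCube η) :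
    profile η ^ 3 = profileCube η := by
  simpa only [profile, one_div, Nat.cast_ofNat] using rpow_inv_natCast_pow h three_ne_zero

theorem hasDerivAt_profile {η : ℝ} (h : 0 < profileCube η) :
    HasDerivAt profile (-(η * profile η) / (5 * profileCube η)) η := by
  have hc : HasDerivAt profileCube (3 / 10 * -(2 * η)) η :=
    (((hasDerivAt_pow 2 η).const_sub (17 / 12 : ℝ)).const_mul (3 / 10 : ℝ)).congr_deriv
      (by push_cast; ring)
  have h' := hc.rpow_const (p := 1 / 3) (Or.inl h.ne')
  rw [rpow_sub_one h.ne'] at h'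
  refine h'.congr_deriv ?_
  rw [profile]
  field_simp
  ring

theorem profile_one : profile 1 = 1 / 2 := by
  have h : profileCube 1 = (1 / 2) ^ 3 := by norm_num [profileCube]
  rw [profile, h, one_div 3]
  exact_mod_cast pow_rpow_inv_natCast (by norm_num : (0 : ℝ) ≤ 1 / 2) three_ne_zero

theorem rpow_mul_rpow_neg_eq_one {t : ℝ} (ht : 0 < t) (a : ℝ) : t ^ a * t ^ (-a) = 1 := by
  rw [rpow_neg ht.le, mul_inv_cancel₀ (rpow_pos_of_pos ht a).ne']

theorem profileCube_pos {η : ℝ} (h : η ^ 2 ≤ 1) : 0 < profileCube η := by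
  unfold profileCube
  linarith

theorem selfSimilar_profile_eq {x t : ℝ} (ht : 0 < t) :
    selfSimilar (1 / 5) profile x t
      = t ^ (-(1 : ℝ) / 5) *
          ((3 / 10) * (17 / 12 - x ^ 2 * t ^ (-(2 : ℝ) / 5))) ^ ((1 : ℝ) / 3) := by
  have h : t ^ (-(2 : ℝ) / 5) = (t ^ (-(1 / 5 : ℝ))) ^ 2 := by
    rw [← rpow_natCast, ← rpow_mul ht.le]
    norm_num
  rw [h, neg_div, ← mul_pow]
  rfl

theorem selfSimilar_profile_flux {x t : ℝ} (ht : 0 < t)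
    (hη : 0 < profileCube (x * t ^ (-(1 / 5 : ℝ)))) :
    selfSimilar (1 / 5) profile x t ^ 3 * deriv (selfSimilar (1 / 5) profile · t) x
      = -(1 / 5) * x * selfSimilar (1 / 5) profile x t / t := by
  rw [(hasDerivAt_selfSimilar_space (hasDerivAt_profile hη)).deriv, selfSimilar, mul_pow,
    profile_pow_three hη.le]
  set s := t ^ (-(1 / 5 : ℝ))
  have hs : s ^ 5 * t = 1 := by
    rw [← rpow_natCast, ← rpow_mul ht.le]
    norm_num [rpow_neg_one, ht.ne']
  set η := x * s with hη_def
  field_simp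
  rw [hη_def]
  linear_combination (-(s * x * profile η)) * hs

theorem selfSimilar_profile_pde {x t : ℝ} (ht : 0 < t)
    (hη : 0 < profileCube (x * t ^ (-(1 / 5 : ℝ)))) :
    deriv (selfSimilar (1 / 5) profile x ·) t
      = deriv (fun ξ => selfSimilar (1 / 5) profile ξ t ^ 3
          * deriv (selfSimilar (1 / 5) profile · t) ξ) x := by
  have hcont : Continuous fun ξ => profileCube (ξ * t ^ (-(1 / 5 : ℝ))) := by
    unfold profileCube
    fun_prop
  have hpos : ∀ᶠ ξ in 𝓝 x, 0 < profileCube (ξ * t ^ (-(1 / 5 : ℝ))) :=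
    continuousAt_const.eventually_lt hcont.continuousAt hη
  have hspace := hasDerivAt_selfSimilar_space (hasDerivAt_profile hη)
  refine deriv_time_eq_deriv_flux (hpos.mono fun ξ hξ => selfSimilar_profile_flux ht hξ)
    hspace.differentiableAt ?_
  rw [hspace.deriv]
  exact hasDerivAt_selfSimilar_time ht (hasDerivAt_profile hη)

theorem selfSimilar_profile_front_value {t : ℝ} (ht : 0 < t) :
    selfSimilar (1 / 5) profile (t ^ (1 / 5 : ℝ)) t = 1 / 2 * t ^ (-(1 / 5 : ℝ)) := by
  rw [selfSimilar, rpow_mul_rpow_neg_eq_one ht, profile_one, mul_comm]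

/-- Since `x_w' = x_w / (5 t)`, this is the flux identity at the front; the two agree because
`x_w u(x_w, t) = 1/2 = -L`. -/
theorem selfSimilar_profile_front_flux {t : ℝ} (ht : 0 < t) :
    deriv (selfSimilar (1 / 5) profile · t) (t ^ (1 / 5 : ℝ))
      = -1 / 2 * (t ^ (1 / 5 : ℝ))⁻¹ * deriv (fun τ : ℝ => τ ^ (1 / 5 : ℝ)) t
          * selfSimilar (1 / 5) profile (t ^ (1 / 5 : ℝ)) t ^ (-3 : ℤ) := by
  have hxs := rpow_mul_rpow_neg_eq_one ht (1 / 5)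
  have hflux := selfSimilar_profile_flux ht (by rw [hxs]; exact profileCube_pos (by norm_num))
  rw [(hasDerivAt_rpow_const (p := 1 / 5) (Or.inl ht.ne')).deriv, rpow_sub_one ht.ne',
    selfSimilar_profile_front_value ht] at *
  set s := t ^ (-(1 / 5 : ℝ))
  have hs : s ≠ 0 := (rpow_pos_of_pos ht _).ne'
  have ha : t ^ (1 / 5 : ℝ) ≠ 0 := (rpow_pos_of_pos ht _).ne'
  rw [zpow_neg, zpow_ofNat]
  field_simp at hflux ⊢
  linear_combination s * hflux - 4 * hxs

/-- The exact similarity solution `u(x,t) = t^{-1/5} ((3/10)(17/12 − x² t^{-2/5}))^{1/3}`,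
`x_w(t) = t^{1/5}` solves the viscous fluid spreading moving boundary problem
with parameters `H = 1/2`, `L = −1/2`. -/
theorem stmt_17 :
    let u : ℝ → ℝ → ℝ := fun x t =>
      t ^ (-(1 : ℝ) / 5) * ((3 / 10) * (17 / 12 - x ^ 2 * t ^ (-(2 : ℝ) / 5))) ^ ((1 : ℝ) / 3)
    let xw : ℝ → ℝ := fun t => t ^ ((1 : ℝ) / 5)
    (∀ t > (0 : ℝ), ∀ x : ℝ, 0 < x → x < xw t →
      deriv (fun τ => u x τ) t
        = deriv (fun ξ => (u ξ t) ^ 3 * deriv (fun ξ' => u ξ' t) ξ) x)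
    ∧ (∀ t > (0 : ℝ), deriv (fun ξ => u ξ t) 0 = 0)
    ∧ (∀ t > (0 : ℝ), u (xw t) t = (1 / 2) * t ^ (-(1 : ℝ) / 5))
    ∧ (∀ t > (0 : ℝ), deriv (fun ξ => u ξ t) (xw t)
        = (-1 / 2) * (xw t)⁻¹ * deriv xw t * (u (xw t) t) ^ (-3 : ℤ))
    ∧ xw 0 = 0 := by
  intro u xw
  have hu : ∀ t > 0, ∀ x, u x t = selfSimilar (1 / 5) profile x t :=
    fun t ht x => (selfSimilar_profile_eq ht).symm
  refine ⟨fun t ht x hx hxt => ?_, fun t ht => ?_, fun t ht => ?_, fun t ht => ?_,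
    zero_rpow (by norm_num)⟩
  · have hη : x * t ^ (-(1 / 5 : ℝ)) < 1 :=
      calc x * t ^ (-(1 / 5 : ℝ)) < t ^ (1 / 5 : ℝ) * t ^ (-(1 / 5 : ℝ)) :=
            mul_lt_mul_of_pos_right hxt (rpow_pos_of_pos ht _)
        _ = 1 := rpow_mul_rpow_neg_eq_one ht _
    have htime : (u x ·) =ᶠ[𝓝 t] (selfSimilar (1 / 5) profile x ·) :=
      (eventually_gt_nhds ht).mono fun τ hτ => hu τ hτ x
    rw [htime.deriv_eq]
    simp only [hu t ht]
    exact selfSimilar_profile_pde ht (profileCube_pos (pow_le_one₀ (by positivity) hη.le))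
  · simp only [hu t ht]
    rw [(hasDerivAt_selfSimilar_space (hasDerivAt_profile (by norm_num [profileCube]))).deriv]
    simp
  · rw [hu t ht, selfSimilar_profile_front_value ht, neg_div]
  · simp only [hu t ht]
    exact selfSimilar_profile_front_flux ht
end
end

section
/- Let h > 0, ω > 0, η_w > 0, and let H ≠ 0, L be real constants. Suppose V : [0, η_w] → ℝ is twice continuously differentiable, V(η) − h^(1/2)·η ≠ 0 on [0, η_w], and V satisfies the extended equation d²V/dη² + 3·(V − h^(1/2)η)^(−1)·(dV/dη − h^(1/2))² + (h²/5)·η·(V − h^(1/2)η)^(−3)·(dV/dη − h^(1/2)) + (h²/5)·(V − h^(1/2)η)^(−2) = 0 on (0, η_w), with free boundary conditions V(η_w) = h·H + h^(1/2)·η_w and dV/dη(η_w) = h^(1/2)·(L/(5H³) + 1). Define h* := ω·h, η_w* := ω^(1/2)·η_w, and V*(η*) := ω·V(ω^(−1/2)·η*) for η* ∈ [0, η_w*]. Then V* satisfies the same extended equation and the same two free boundary conditions with h replaced by h* and η_w replaced by η_w*, and moreover dV*/dη*(0) = ω^(1/2)·dV/dη(0). -/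
/-!
Write `a = ω^(1/2)`. Since `V*(η) = ω V(η / a)`, the chain rule gives `V*' (a t) = a V'(t)` and
`V*'' (a t) = V''(t)`. Each term of the equation is therefore homogeneous of degree zero under
`(h, η, V, V', V'') ↦ (ω h, a η, ω V, a V', V'')`: for instance `V - h^(1/2) η` scales by `ω` and
`V' - h^(1/2)` by `a`. So the residual of the equation at `a t` for `(h*, V*)` equals the residual
at `t` for `(h, V)`; the boundary conditions transform the same way at `η_w* = a η_w`.
-/

open Real Set

section ScaledDerivatives

variable {𝕜 : Type*} [NontriviallyNormedField 𝕜]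

theorem deriv_const_mul_comp_mul_left (k c : 𝕜) (f : 𝕜 → 𝕜) (x : 𝕜) :
    deriv (fun y => k * f (c * y)) x = k * c * deriv f (c * x) := by
  rw [deriv_const_mul_field, deriv_comp_mul_left, smul_eq_mul, mul_assoc]

theorem deriv_deriv_const_mul_comp_mul_left (k c : 𝕜) (f : 𝕜 → 𝕜) (x : 𝕜) :
    deriv (deriv fun y => k * f (c * y)) x = k * c ^ 2 * deriv (deriv f) (c * x) := by
  have hd : deriv (fun y => k * f (c * y)) = fun y => k * c * deriv f (c * y) :=
    funext (deriv_const_mul_comp_mul_left k c f)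
  rw [hd, deriv_const_mul_comp_mul_left]
  ring

end ScaledDerivatives

theorem rpow_half_mul_self {ω : ℝ} (hω : 0 < ω) :
    ω ^ ((1 : ℝ) / 2) * ω ^ ((1 : ℝ) / 2) = ω := by
  rw [← rpow_add hω]; norm_num

theorem rpow_half_mul_rpow_neg_half {ω : ℝ} (hω : 0 < ω) :
    ω ^ ((1 : ℝ) / 2) * ω ^ (-(1 : ℝ) / 2) = 1 := by
  rw [← rpow_add hω]; norm_num

/-- `v`, `dv`, `ddv` stand for the values of `V`, `V'`, `V''` at `η`. -/
noncomputable def extendedResidual (h η v dv ddv : ℝ) : ℝ :=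
  ddv + 3 * (v - h ^ ((1 : ℝ) / 2) * η)⁻¹ * (dv - h ^ ((1 : ℝ) / 2)) ^ 2
    + (h ^ 2 / 5) * η * (v - h ^ ((1 : ℝ) / 2) * η) ^ (-3 : ℤ) * (dv - h ^ ((1 : ℝ) / 2))
    + (h ^ 2 / 5) * (v - h ^ ((1 : ℝ) / 2) * η) ^ (-2 : ℤ)

theorem extendedResidual_scale {ω h : ℝ} (hω : 0 < ω) (hh : 0 ≤ h) (η v dv ddv : ℝ) :
    extendedResidual (ω * h) (ω ^ ((1 : ℝ) / 2) * η) (ω * v) (ω ^ ((1 : ℝ) / 2) * dv) ddv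
      = extendedResidual h η v dv ddv := by
  have ha := rpow_half_mul_self hω
  have ha0 : ω ^ ((1 : ℝ) / 2) ≠ 0 := (rpow_pos_of_pos hω _).ne'
  unfold extendedResidual
  rw [mul_rpow hω.le hh]
  generalize ω ^ ((1 : ℝ) / 2) = a at ha ha0
  generalize h ^ ((1 : ℝ) / 2) = q
  subst ha
  have hD : a * a * v - a * q * (a * η) = a ^ 2 * (v - q * η) := by ring
  rw [hD, mul_inv, mul_zpow, mul_zpow]
  simp only [zpow_neg, zpow_ofNat]
  field_simp

theorem stmt_18_general (h ω ηw H L : ℝ) (hh : 0 < h) (hω : 0 < ω) (V : ℝ → ℝ)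
    (hode : ∀ η ∈ Set.Ioo (0 : ℝ) ηw,
      deriv (deriv V) η
        + 3 * (V η - h ^ ((1 : ℝ) / 2) * η)⁻¹ * (deriv V η - h ^ ((1 : ℝ) / 2)) ^ 2
        + (h ^ 2 / 5) * η * (V η - h ^ ((1 : ℝ) / 2) * η) ^ (-3 : ℤ)
          * (deriv V η - h ^ ((1 : ℝ) / 2))
        + (h ^ 2 / 5) * (V η - h ^ ((1 : ℝ) / 2) * η) ^ (-2 : ℤ) = 0)
    (hbc1 : V ηw = h * H + h ^ ((1 : ℝ) / 2) * ηw)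
    (hbc2 : deriv V ηw = h ^ ((1 : ℝ) / 2) * (L / (5 * H ^ 3) + 1)) :
    let hs := ω * h
    let ηws := ω ^ ((1 : ℝ) / 2) * ηw
    let Vs : ℝ → ℝ := fun η => ω * V (ω ^ (-(1 : ℝ) / 2) * η)
    (∀ η ∈ Set.Ioo (0 : ℝ) ηws,
      deriv (deriv Vs) η
        + 3 * (Vs η - hs ^ ((1 : ℝ) / 2) * η)⁻¹ * (deriv Vs η - hs ^ ((1 : ℝ) / 2)) ^ 2
        + (hs ^ 2 / 5) * η * (Vs η - hs ^ ((1 : ℝ) / 2) * η) ^ (-3 : ℤ)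
          * (deriv Vs η - hs ^ ((1 : ℝ) / 2))
        + (hs ^ 2 / 5) * (Vs η - hs ^ ((1 : ℝ) / 2) * η) ^ (-2 : ℤ) = 0)
    ∧ Vs ηws = hs * H + hs ^ ((1 : ℝ) / 2) * ηws
    ∧ deriv Vs ηws = hs ^ ((1 : ℝ) / 2) * (L / (5 * H ^ 3) + 1)
    ∧ deriv Vs 0 = ω ^ ((1 : ℝ) / 2) * deriv V 0 := by
  intro hs ηws Vs
  set a := ω ^ ((1 : ℝ) / 2)
  set b := ω ^ (-(1 : ℝ) / 2)
  have haa : a * a = ω := rpow_half_mul_self hω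
  have hab : a * b = 1 := rpow_half_mul_rpow_neg_half hω
  have hb : 0 < b := rpow_pos_of_pos hω _
  have hba (t : ℝ) : b * (a * t) = t := by rw [← mul_assoc, mul_comm b, hab, one_mul]
  have hVs' (x : ℝ) : deriv Vs x = a * deriv V (b * x) := by
    rw [deriv_const_mul_comp_mul_left, show ω * b = a by linear_combination a * hab - b * haa]
  have hVs'' (x : ℝ) : deriv (deriv Vs) x = deriv (deriv V) (b * x) := by
    rw [deriv_deriv_const_mul_comp_mul_left,
      show ω * b ^ 2 = 1 by linear_combination (a * b + 1) * hab - b ^ 2 * haa, one_mul]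
  have hhs : hs ^ ((1 : ℝ) / 2) = a * h ^ ((1 : ℝ) / 2) := mul_rpow hω.le hh.le
  refine ⟨?_, ?_, ?_, ?_⟩
  · rintro η ⟨hη0, hηw⟩
    obtain ⟨t, ht, rfl⟩ : ∃ t ∈ Ioo 0 ηw, η = a * t := by
      refine ⟨b * η, ⟨mul_pos hb hη0, ?_⟩, by rw [← mul_assoc, hab, one_mul]⟩
      calc b * η < b * ηws := mul_lt_mul_of_pos_left hηw hb
        _ = ηw := hba ηw
    show extendedResidual (ω * h) (a * t) (ω * V (b * (a * t))) (deriv Vs (a * t))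
      (deriv (deriv Vs) (a * t)) = 0
    rw [hVs', hVs'', hba, extendedResidual_scale hω hh.le]
    exact hode t ht
  · show ω * V (b * (a * ηw)) = ω * h * H + hs ^ ((1 : ℝ) / 2) * (a * ηw)
    rw [hba, hbc1, hhs]
    linear_combination h ^ ((1 : ℝ) / 2) * ηw * haa.symm
  · rw [hVs', hba, hbc2, hhs]; ring
  · rw [hVs', mul_zero]

/-- Invariance of the extended viscous fluid free boundary problem (governing
equation and the two free boundary conditions) under the extended scaling group
`η* = ω^{1/2} η, η_w* = ω^{1/2} η_w, V* = ω V, h* = ω h`, together with the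
scaling law `dV*/dη*(0) = ω^{1/2} dV/dη(0)` for the non-invariant condition. -/
theorem stmt_18 (h ω ηw H L : ℝ) (hh : 0 < h) (hω : 0 < ω) (hηw : 0 < ηw)
    (hH : H ≠ 0) (V : ℝ → ℝ) (hV : ContDiffOn ℝ 2 V (Set.Icc 0 ηw))
    (hne : ∀ η ∈ Set.Icc (0 : ℝ) ηw, V η - h ^ ((1 : ℝ) / 2) * η ≠ 0)
    (hode : ∀ η ∈ Set.Ioo (0 : ℝ) ηw,
      deriv (deriv V) η
        + 3 * (V η - h ^ ((1 : ℝ) / 2) * η)⁻¹ * (deriv V η - h ^ ((1 : ℝ) / 2)) ^ 2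
        + (h ^ 2 / 5) * η * (V η - h ^ ((1 : ℝ) / 2) * η) ^ (-3 : ℤ)
          * (deriv V η - h ^ ((1 : ℝ) / 2))
        + (h ^ 2 / 5) * (V η - h ^ ((1 : ℝ) / 2) * η) ^ (-2 : ℤ) = 0)
    (hbc1 : V ηw = h * H + h ^ ((1 : ℝ) / 2) * ηw)
    (hbc2 : deriv V ηw = h ^ ((1 : ℝ) / 2) * (L / (5 * H ^ 3) + 1)) :
    let hs := ω * h
    let ηws := ω ^ ((1 : ℝ) / 2) * ηw
    let Vs : ℝ → ℝ := fun η => ω * V (ω ^ (-(1 : ℝ) / 2) * η)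
    (∀ η ∈ Set.Ioo (0 : ℝ) ηws,
      deriv (deriv Vs) η
        + 3 * (Vs η - hs ^ ((1 : ℝ) / 2) * η)⁻¹ * (deriv Vs η - hs ^ ((1 : ℝ) / 2)) ^ 2
        + (hs ^ 2 / 5) * η * (Vs η - hs ^ ((1 : ℝ) / 2) * η) ^ (-3 : ℤ)
          * (deriv Vs η - hs ^ ((1 : ℝ) / 2))
        + (hs ^ 2 / 5) * (Vs η - hs ^ ((1 : ℝ) / 2) * η) ^ (-2 : ℤ) = 0)
    ∧ Vs ηws = hs * H + hs ^ ((1 : ℝ) / 2) * ηws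
    ∧ deriv Vs ηws = hs ^ ((1 : ℝ) / 2) * (L / (5 * H ^ 3) + 1)
    ∧ deriv Vs 0 = ω ^ ((1 : ℝ) / 2) * deriv V 0 :=
  stmt_18_general h ω ηw H L hh hω V hode hbc1 hbc2
end
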